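/- Let C_3 = ⟨s⟩ act on the polynomial ring W[x₁, x₂, x₃] over W = W(F_9) by cyclically permuting the variables: s(x₁) = x₂, s(x₂) = x₃, s(x₃) = x₁. Then the invariant ring W[x₁,x₂,x₃]^{C_3} is generated as a W-algebra by the elementary symmetric polynomials σ₁, σ₂, σ₃ together with ε = x₁²x₂ + x₂²x₃ + x₃²x₁ - x₂²x₁ - x₁²x₃ - x₃²x₂, and is isomorphic to W[σ₁, σ₂, σ₃, ε]/(ε² - f) where f = -27σ₃² - 4σ₂³ - 4σ₃σ₁³ + 18σ₁σ₂σ₃ + σ₁²σ₂². -/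

import Mathlib

open MvPolynomial

noncomputable section

instance : Fact (Nat.Prime 3) := ⟨by norm_num⟩

/-- `W = W(F₉)`, the Witt vectors of the field with nine elements. -/
abbrev W : Type := WittVector 3 (GaloisField 3 2)

/-- The cyclic permutation `x₁ ↦ x₂ ↦ x₃ ↦ x₁` of the variables. -/
def cyc : Fin 3 → Fin 3 := ⇑(finRotate 3)

/-- The invariants of `W[x₁,x₂,x₃]` under the `C₃`-action cyclically permuting the
variables, as a subalgebra. -/
def invariants : Subalgebra W (MvPolynomial (Fin 3) W) where
  carrier := {P | rename cyc P = P}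
  mul_mem' := fun ha hb => by
    simp only [Set.mem_setOf_eq, map_mul] at *; rw [ha, hb]
  add_mem' := fun ha hb => by
    simp only [Set.mem_setOf_eq, map_add] at *; rw [ha, hb]
  algebraMap_mem' := fun r => (rename cyc).commutes r

def σ₁ : MvPolynomial (Fin 3) W := X 0 + X 1 + X 2
def σ₂ : MvPolynomial (Fin 3) W := X 0 * X 1 + X 1 * X 2 + X 2 * X 0
def σ₃ : MvPolynomial (Fin 3) W := X 0 * X 1 * X 2

/-- The antisymmetrization of `x₁²x₂`. -/
def ε : MvPolynomial (Fin 3) W :=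
  X 0 ^ 2 * X 1 + X 1 ^ 2 * X 2 + X 2 ^ 2 * X 0
    - X 1 ^ 2 * X 0 - X 0 ^ 2 * X 2 - X 2 ^ 2 * X 1

/-- The relation `ε² = f(σ₁, σ₂, σ₃)` defining `S(F)^{C₃}`, in the polynomial ring on
variables `Y₀ = σ₁, Y₁ = σ₂, Y₂ = σ₃, Y₃ = ε`. -/
def rel : MvPolynomial (Fin 4) W :=
  X 3 ^ 2 - (-27 * X 2 ^ 2 - 4 * X 1 ^ 3 - 4 * X 2 * X 0 ^ 3
    + 18 * X 0 * X 1 * X 2 + X 0 ^ 2 * X 1 ^ 2)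

/-!
Since `2` is a unit in `W`, a `C₃`-invariant `P` splits as `½(P + τP) + ½(P - τP)` with
`τ = (x₁ x₂)`. As `S₃` is generated by the `3`-cycle and `τ`, the first summand is symmetric and
the second alternating. An alternating polynomial vanishes on every diagonal `xᵢ = xⱼ`, so it is
the Vandermonde product `ε` times a symmetric polynomial, and the fundamental theorem on
symmetric polynomials shows that `σ₁, σ₂, σ₃, ε` generate.

For the presentation, view `W[Y₀,Y₁,Y₂,Y₃]` as polynomials in `Y₃` and divide by the monic
`Y₃² - f`: a relation reduces to `a(σ) + b(σ) ε = 0`. Applying `τ` gives `a(σ) - b(σ) ε = 0`,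
so `a(σ) = b(σ) = 0`, and `a = b = 0` by the algebraic independence of `σ₁, σ₂, σ₃`.
-/

theorem WittVector.isUnit_natCast {p : ℕ} [Fact p.Prime] {k : Type*} [Field k] [CharP k p]
    {n : ℕ} (hn : ¬ p ∣ n) : IsUnit (n : WittVector p k) := by
  refine isUnit_of_coeff_zero_ne_zero _ ?_
  rw [show (n : WittVector p k).coeff 0 = n from map_natCast constantCoeff n]
  exact (CharP.cast_eq_zero_iff k p n).not.2 hn

theorem Polynomial.Monic.dvd_of_ringHom_eq_zero {S A : Type*} [CommRing S] [Nontrivial S]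
    [Semiring A] {p g : Polynomial S} (hp : p.Monic) (ψ : Polynomial S →+* A) (hψp : ψ p = 0)
    (hlow : ∀ r : Polynomial S, r.degree < p.degree → ψ r = 0 → r = 0) (hg : ψ g = 0) :
    p ∣ g := by
  rw [← Polynomial.modByMonic_eq_zero_iff_dvd hp]
  refine hlow _ (Polynomial.degree_modByMonic_lt g hp) ?_
  have h := congrArg ψ (Polynomial.modByMonic_add_div g p)
  rwa [map_add, map_mul, hψp, zero_mul, add_zero, hg] at h

namespace MvPolynomial

variable {σ R : Type*} [CommRing R]

def IsAlternating [Fintype σ] [DecidableEq σ] (P : MvPolynomial σ R) : Prop :=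
  ∀ e : Equiv.Perm σ, rename e P = Equiv.Perm.sign e • P

theorem rename_eq_smul_of_closure_eq_top {S : Set (Equiv.Perm σ)} (hS : Subgroup.closure S = ⊤)
    (χ : Equiv.Perm σ →* ℤˣ) {P : MvPolynomial σ R} (h : ∀ g ∈ S, rename g P = χ g • P)
    (g : Equiv.Perm σ) : rename g P = χ g • P := by
  induction (hS ▸ Subgroup.mem_top g : g ∈ Subgroup.closure S) using Subgroup.closure_induction with
  | mem g hg => exact h g hg
  | one => simp
  | mul g h _ _ hg hh =>
    rw [Equiv.Perm.coe_mul, ← rename_rename, hh, map_zsmul_unit, hg, map_mul, mul_comm, mul_smul]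
  | inv g _ hg =>
    have hP := congrArg (rename ⇑g⁻¹) hg
    rw [rename_rename, ← Equiv.Perm.coe_mul, inv_mul_cancel, Equiv.Perm.coe_one, rename_id_apply,
      map_zsmul_unit] at hP
    conv_rhs => rw [hP, smul_smul, map_inv, inv_mul_cancel, one_smul]

def replaceVar [DecidableEq σ] (i j : σ) : MvPolynomial σ R →ₐ[R] MvPolynomial σ R :=
  aeval (Function.update X i (X j))

theorem replaceVar_X_sub_X [DecidableEq σ] (i j : σ) :
    replaceVar i j (X i - X j : MvPolynomial σ R) = 0 := by
  by_cases hij : j = i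
  · simp [replaceVar, hij]
  · simp [replaceVar, Function.update_of_ne hij]

theorem X_sub_X_dvd_iff_replaceVar_eq_zero [DecidableEq σ] {i j : σ} {P : MvPolynomial σ R} :
    X i - X j ∣ P ↔ replaceVar i j P = 0 := by
  refine ⟨fun ⟨c, hc⟩ => by rw [hc, map_mul, replaceVar_X_sub_X, zero_mul], fun hP => ?_⟩
  let mk := Ideal.Quotient.mkₐ R (Ideal.span {(X i - X j : MvPolynomial σ R)})
  have hcomp : mk.comp (replaceVar i j) = mk := by
    refine algHom_ext fun k => ?_
    by_cases hki : k = i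
    · subst hki
      simp only [mk, replaceVar, AlgHom.comp_apply, aeval_X, Function.update_self,
        Ideal.Quotient.mkₐ_eq_mk, Ideal.Quotient.eq]
      exact Ideal.mem_span_singleton.2 ⟨-1, by ring⟩
    · simp [replaceVar, Function.update_of_ne hki]
  rw [← Ideal.mem_span_singleton, ← Ideal.Quotient.eq_zero_iff_mem]
  simpa [hP, mk] using (congrArg (· P) hcomp).symm

theorem prime_X_sub_X [IsDomain R] {i j : σ} (hij : i ≠ j) :
    Prime (X i - X j : MvPolynomial σ R) := by
  classical
  have hne : (X i - X j : MvPolynomial σ R) ≠ 0 := sub_ne_zero.2 (X_injective.ne hij)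
  have hker : RingHom.ker (replaceVar (R := R) i j) = Ideal.span {X i - X j} := by
    ext P
    rw [RingHom.mem_ker, Ideal.mem_span_singleton, X_sub_X_dvd_iff_replaceVar_eq_zero]
  rw [← Ideal.span_singleton_prime hne, ← hker]
  exact RingHom.ker_isPrime _

theorem X_sub_X_dvd_of_rename_swap_eq_neg [DecidableEq σ] (h2 : IsUnit (2 : R)) {i j : σ}
    {P : MvPolynomial σ R} (hP : rename (Equiv.swap i j) P = -P) : X i - X j ∣ P := by
  have hswap : Function.update (X : σ → MvPolynomial σ R) i (X j) ∘ Equiv.swap i j =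
      Function.update X i (X j) := by
    funext k
    rcases eq_or_ne k i with rfl | hki
    · by_cases h : j = k <;> simp [h]
    rcases eq_or_ne k j with rfl | hkj
    · simp [Function.update_of_ne hki]
    · simp [Equiv.swap_apply_of_ne_of_ne hki hkj, Function.update_of_ne hki]
  have hneg : replaceVar i j P = -replaceVar i j P := by
    rw [← map_neg, ← hP, replaceVar, aeval_rename, hswap]
  have h2' : IsUnit (2 : MvPolynomial σ R) := by
    simpa only [map_ofNat] using h2.map (C : R →+* MvPolynomial σ R)
  rw [X_sub_X_dvd_iff_replaceVar_eq_zero]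
  exact h2'.mul_right_eq_zero.1 (by linear_combination hneg)

theorem mul_X_sub_X_dvd [IsDomain R] [DecidableEq σ] {i j : σ} (hij : i ≠ j)
    {Q P : MvPolynomial σ R} (hQ : Q ∣ P) (hXP : X i - X j ∣ P) (hQij : replaceVar i j Q ≠ 0) :
    Q * (X i - X j) ∣ P := by
  have hrel : IsRelPrime (X i - X j) Q :=
    (prime_X_sub_X hij).irreducible.isRelPrime_iff_not_dvd.2
      (X_sub_X_dvd_iff_replaceVar_eq_zero.not.2 hQij)
  exact hrel.symm.mul_dvd_of_right_isPrimal hQ hXP (prime_X_sub_X hij).isPrimal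

theorem IsAlternating.vandermonde_dvd [IsDomain R] (h2 : IsUnit (2 : R))
    {B : MvPolynomial (Fin 3) R} (hB : B.IsAlternating) :
    (X 0 - X 1) * (X 1 - X 2) * (X 0 - X 2) ∣ B := by
  have hdvd {i j : Fin 3} (hij : i ≠ j) : X i - X j ∣ B :=
    X_sub_X_dvd_of_rename_swap_eq_neg h2
      (by rw [hB, Equiv.Perm.sign_swap hij, Units.neg_smul, one_smul])
  refine mul_X_sub_X_dvd (by decide) (mul_X_sub_X_dvd (by decide) (hdvd (by decide))
    (hdvd (by decide)) ?_) (hdvd (by decide)) ?_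
  · simp [replaceVar, sub_eq_zero]
  · simp [replaceVar, sub_eq_zero]

def lastVarEquiv (R : Type*) [CommRing R] (n : ℕ) :
    MvPolynomial (Fin (n + 1)) R ≃ₐ[R] Polynomial (MvPolynomial (Fin n) R) :=
  (renameEquiv R finSuccEquivLast).trans (optionEquivLeft R (Fin n))

theorem lastVarEquiv_X (k : Fin 4) :
    lastVarEquiv R 3 (X k) = ![.C (X 0), .C (X 1), .C (X 2), Polynomial.X] k := by
  induction k using Fin.lastCases with
  | last =>
    rw [lastVarEquiv, AlgEquiv.trans_apply, renameEquiv_apply, rename_X, finSuccEquivLast_last,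
      optionEquivLeft_X_none]
    rfl
  | cast i =>
    rw [lastVarEquiv, AlgEquiv.trans_apply, renameEquiv_apply, rename_X,
      finSuccEquivLast_castSucc, optionEquivLeft_X_some]
    fin_cases i <;> rfl

end MvPolynomial

section Fin3

variable {R : Type*} [CommRing R]

theorem closure_finRotate_swap_eq_top :
    Subgroup.closure ({finRotate 3, Equiv.swap 0 1} : Set (Equiv.Perm (Fin 3))) = ⊤ :=
  Equiv.Perm.closure_cycle_adjacent_swap isCycle_finRotate support_finRotate 0

theorem isSymmetric_of_rename_cyc_of_rename_swap {P : MvPolynomial (Fin 3) R}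
    (hc : rename cyc P = P) (ht : rename (Equiv.swap 0 1) P = P) : P.IsSymmetric := fun g => by
  simpa using rename_eq_smul_of_closure_eq_top closure_finRotate_swap_eq_top 1
    (by rintro _ (rfl | rfl) <;> simpa) g

theorem isAlternating_of_rename_cyc_of_rename_swap {P : MvPolynomial (Fin 3) R}
    (hc : rename cyc P = P) (ht : rename (Equiv.swap 0 1) P = -P) : P.IsAlternating :=
  rename_eq_smul_of_closure_eq_top closure_finRotate_swap_eq_top Equiv.Perm.sign
    (by rintro _ (rfl | rfl) <;> simpa [sign_finRotate, Equiv.Perm.sign_swap])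

theorem rename_cyc_rename_swap {P : MvPolynomial (Fin 3) R} (hP : rename cyc P = P) :
    rename cyc (rename (Equiv.swap 0 1) P) = rename (Equiv.swap 0 1) P := by
  rw [rename_rename, show cyc ∘ Equiv.swap 0 1 = Equiv.swap 0 1 ∘ cyc ∘ cyc by decide,
    ← rename_rename, ← rename_rename, hP, hP]

theorem exists_isSymmetric_isAlternating_add_eq_two_smul {P : MvPolynomial (Fin 3) R}
    (hP : rename cyc P = P) :
    ∃ A B : MvPolynomial (Fin 3) R, A.IsSymmetric ∧ B.IsAlternating ∧ A + B = (2 : R) • P := by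
  have hτ : rename (Equiv.swap (0 : Fin 3) 1) (rename (Equiv.swap 0 1) P) = P := by
    rw [rename_rename, ← Equiv.Perm.coe_mul, Equiv.swap_mul_self, Equiv.Perm.coe_one,
      rename_id_apply]
  refine ⟨P + rename (Equiv.swap 0 1) P, P - rename (Equiv.swap 0 1) P, ?_, ?_, ?_⟩
  · refine isSymmetric_of_rename_cyc_of_rename_swap ?_ ?_
    · rw [map_add, hP, rename_cyc_rename_swap hP]
    · rw [map_add, hτ, add_comm]
  · refine isAlternating_of_rename_cyc_of_rename_swap ?_ ?_
    · rw [map_sub, hP, rename_cyc_rename_swap hP]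
    · rw [map_sub, hτ, neg_sub]
  · rw [two_smul]; ring

end Fin3

theorem isUnit_two_W : IsUnit (2 : W) := by
  exact_mod_cast WittVector.isUnit_natCast (p := 3) (k := GaloisField 3 2) (n := 2) (by norm_num)

theorem ε_eq_vandermonde : ε = (X 0 - X 1) * (X 1 - X 2) * (X 0 - X 2) := by
  rw [ε]; ring

theorem ε_ne_zero : ε ≠ 0 := by
  simp [ε_eq_vandermonde, sub_eq_zero]

theorem isAlternating_ε : ε.IsAlternating := by
  refine isAlternating_of_rename_cyc_of_rename_swap ?_ ?_ <;>
    simp [ε, cyc, Equiv.swap_apply_of_ne_of_ne] <;> ring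

theorem MvPolynomial.IsAlternating.exists_isSymmetric_eq_ε_mul {B : MvPolynomial (Fin 3) W}
    (hB : B.IsAlternating) : ∃ q : MvPolynomial (Fin 3) W, q.IsSymmetric ∧ B = ε * q := by
  obtain ⟨q, rfl⟩ := ε_eq_vandermonde ▸ hB.vandermonde_dvd isUnit_two_W
  refine ⟨q, fun g => ?_, rfl⟩
  have h := hB g
  rw [map_mul, isAlternating_ε, smul_mul_assoc] at h
  exact mul_left_cancel₀ ε_ne_zero ((smul_left_cancel_iff _).1 h)

theorem esymm_succ_eq (i : Fin 3) : esymm (Fin 3) W (i + 1) = ![σ₁, σ₂, σ₃] i := by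
  fin_cases i
  · simp [esymm, show (Finset.univ : Finset (Fin 3)).powersetCard 1 = {{0}, {1}, {2}} by decide,
      σ₁]
    ring
  · rw [esymm,
      show (Finset.univ : Finset (Fin 3)).powersetCard 2 = {{0, 1}, {1, 2}, {0, 2}} by decide,
      Finset.sum_insert (by decide), Finset.sum_pair (by decide)]
    simp [σ₂]
    ring
  · simp [esymm, show (Finset.univ : Finset (Fin 3)).powersetCard 3 = {{0, 1, 2}} by decide, σ₃]
    ring

def aevalσ : MvPolynomial (Fin 3) W →ₐ[W] MvPolynomial (Fin 3) W := aeval ![σ₁, σ₂, σ₃]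

theorem aevalσ_eq_esymmAlgHom (p : MvPolynomial (Fin 3) W) :
    aevalσ p = esymmAlgHom (Fin 3) W 3 p := by
  rw [esymmAlgHom_apply, aevalσ, funext esymm_succ_eq]

theorem aevalσ_injective : Function.Injective aevalσ := fun a b hab =>
  esymmAlgHom_injective (σ := Fin 3) W (n := 3) (by simp)
    (Subtype.ext (by simpa [aevalσ_eq_esymmAlgHom] using hab))

theorem range_aevalσ : aevalσ.range = symmetricSubalgebra (Fin 3) W := by
  ext Q
  rw [AlgHom.mem_range]
  constructor
  · rintro ⟨p, rfl⟩
    rw [aevalσ_eq_esymmAlgHom]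
    exact (esymmAlgHom (Fin 3) W 3 p).2
  · intro hQ
    obtain ⟨p, hp⟩ := esymmAlgHom_surjective (σ := Fin 3) W (n := 3) (by simp) ⟨Q, hQ⟩
    exact ⟨p, by rw [aevalσ_eq_esymmAlgHom, hp]⟩

theorem adjoin_σ_eq_range_aevalσ : Algebra.adjoin W {σ₁, σ₂, σ₃} = aevalσ.range := by
  rw [aevalσ, ← Algebra.adjoin_range_eq_range_aeval]
  congr 1
  ext
  simp [Matrix.range_cons, or_comm, or_left_comm]

theorem adjoin_eq_invariants : Algebra.adjoin W {σ₁, σ₂, σ₃, ε} = invariants := by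
  refine le_antisymm (Algebra.adjoin_le ?_) fun P hP => ?_
  · rintro _ (rfl | rfl | rfl | rfl) <;> show rename cyc _ = _ <;>
      simp [σ₁, σ₂, σ₃, ε, cyc] <;> ring
  have hsymm {Q : MvPolynomial (Fin 3) W} (hQ : Q.IsSymmetric) :
      Q ∈ Algebra.adjoin W {σ₁, σ₂, σ₃, ε} := by
    have hQ' : Q ∈ Algebra.adjoin W {σ₁, σ₂, σ₃} := by
      rwa [adjoin_σ_eq_range_aevalσ, range_aevalσ]
    exact Algebra.adjoin_mono (by simp [Set.insert_subset_iff]) hQ'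
  obtain ⟨A, B, hA, hB, hAB⟩ := exists_isSymmetric_isAlternating_add_eq_two_smul hP
  obtain ⟨q, hq, rfl⟩ := hB.exists_isSymmetric_eq_ε_mul
  obtain ⟨u, hu⟩ := isUnit_two_W
  rw [← one_smul W P, ← u.inv_mul, mul_smul, hu, ← hAB]
  exact Subalgebra.smul_mem _ (add_mem (hsymm hA)
    (mul_mem (Algebra.subset_adjoin (by simp)) (hsymm hq))) _

theorem aevalσ_add_mul_ε_eq_zero {a b : MvPolynomial (Fin 3) W}
    (h : aevalσ a + aevalσ b * ε = 0) : a = 0 ∧ b = 0 := by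
  have hsymm (p : MvPolynomial (Fin 3) W) : rename (Equiv.swap 0 1) (aevalσ p) = aevalσ p :=
    (range_aevalσ ▸ AlgHom.mem_range_self aevalσ p : aevalσ p ∈ symmetricSubalgebra (Fin 3) W) _
  have h' : aevalσ a - aevalσ b * ε = 0 := by
    simpa [hsymm, isAlternating_ε (Equiv.swap 0 1), Equiv.Perm.sign_swap, sub_eq_add_neg] using
      congrArg (rename (Equiv.swap 0 1)) h
  have h2 : IsUnit (2 : MvPolynomial (Fin 3) W) := by
    simpa only [map_ofNat] using isUnit_two_W.map (C : W →+* MvPolynomial (Fin 3) W)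
  have ha : aevalσ a = 0 := h2.mul_right_eq_zero.1 (by linear_combination h + h')
  have hb : aevalσ b = 0 :=
    (mul_eq_zero.1 (by linear_combination h - ha)).resolve_right ε_ne_zero
  exact ⟨aevalσ_injective (by rw [ha, map_zero]), aevalσ_injective (by rw [hb, map_zero])⟩

theorem lastVarEquiv_rel : lastVarEquiv W 3 rel = Polynomial.X ^ 2 - Polynomial.C (-27 * X 2 ^ 2
    - 4 * X 1 ^ 3 - 4 * X 2 * X 0 ^ 3 + 18 * X 0 * X 1 * X 2 + X 0 ^ 2 * X 1 ^ 2) := by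
  simp only [rel, lastVarEquiv_X, map_sub, map_add, map_mul, map_pow, map_neg, map_ofNat]
  simp

def aevalσε : MvPolynomial (Fin 4) W →ₐ[W] MvPolynomial (Fin 3) W := aeval ![σ₁, σ₂, σ₃, ε]

theorem aevalσε_eq_eval₂ (g : MvPolynomial (Fin 4) W) :
    aevalσε g = (lastVarEquiv W 3 g).eval₂ aevalσ ε := by
  suffices h : (Polynomial.eval₂RingHom (aevalσ : MvPolynomial (Fin 3) W →+* _) ε).comp
      (lastVarEquiv W 3 : MvPolynomial (Fin 4) W →+* _) = aevalσε from (congrArg (· g) h).symm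
  refine ringHom_ext (fun w => ?_) (fun k => ?_)
  · simp [aevalσε, aevalσ, lastVarEquiv]
  · fin_cases k <;> simp [lastVarEquiv_X, aevalσε, aevalσ]

theorem aevalσε_rel : aevalσε rel = 0 := by
  simp only [aevalσε, rel, map_sub, map_add, map_mul, map_pow, map_neg, map_ofNat, aeval_X]
  simp only [Matrix.cons_val, σ₁, σ₂, σ₃, ε]
  ring

theorem ker_aevalσε : RingHom.ker aevalσε = Ideal.span {rel} := by
  ext g
  rw [RingHom.mem_ker, Ideal.mem_span_singleton]
  refine ⟨fun hg => ?_, by rintro ⟨c, rfl⟩; rw [map_mul, aevalσε_rel, zero_mul]⟩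
  have hmonic : (lastVarEquiv W 3 rel).Monic :=
    lastVarEquiv_rel ▸ Polynomial.monic_X_pow_sub_C _ two_ne_zero
  have hdvd := hmonic.dvd_of_ringHom_eq_zero (g := lastVarEquiv W 3 g)
    (Polynomial.eval₂RingHom (aevalσ : MvPolynomial (Fin 3) W →+* _) ε)
    (by rw [Polynomial.coe_eval₂RingHom, ← aevalσε_eq_eval₂, aevalσε_rel]) ?_
    (by rw [Polynomial.coe_eval₂RingHom, ← aevalσε_eq_eval₂, hg])
  · simpa using map_dvd (lastVarEquiv W 3).symm hdvd
  intro r hr hψr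
  rw [lastVarEquiv_rel, Polynomial.degree_X_pow_sub_C two_pos] at hr
  rw [Polynomial.eq_X_add_C_of_degree_le_one (Order.le_of_lt_succ hr)] at hψr ⊢
  obtain ⟨h0, h1⟩ := aevalσ_add_mul_ε_eq_zero (a := r.coeff 0) (b := r.coeff 1)
    (by simpa [add_comm] using hψr)
  simp [h0, h1]

theorem range_aevalσε : aevalσε.range = invariants := by
  rw [← adjoin_eq_invariants, aevalσε, ← Algebra.adjoin_range_eq_range_aeval]
  congr 1
  ext
  simp [Matrix.range_cons, or_comm, or_left_comm]

/-- the `C₃`-invariants of `W[x₁,x₂,x₃]` are generated as a `W`-algebra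
by `σ₁, σ₂, σ₃, ε`, and the invariant ring is isomorphic to
`W[σ₁,σ₂,σ₃,ε]/(ε² - f)` with `f = -27σ₃² - 4σ₂³ - 4σ₃σ₁³ + 18σ₁σ₂σ₃ + σ₁²σ₂²`. -/
theorem invariants_presentation :
    Algebra.adjoin W ({σ₁, σ₂, σ₃, ε} : Set (MvPolynomial (Fin 3) W)) = invariants ∧
      ∃ e : (MvPolynomial (Fin 4) W ⧸ Ideal.span {rel}) ≃ₐ[W] ↥invariants,
        (e (Ideal.Quotient.mk _ (X 0)) : MvPolynomial (Fin 3) W) = σ₁ ∧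
        (e (Ideal.Quotient.mk _ (X 1)) : MvPolynomial (Fin 3) W) = σ₂ ∧
        (e (Ideal.Quotient.mk _ (X 2)) : MvPolynomial (Fin 3) W) = σ₃ ∧
        (e (Ideal.Quotient.mk _ (X 3)) : MvPolynomial (Fin 3) W) = ε := by
  refine ⟨adjoin_eq_invariants, (Ideal.quotientEquivAlgOfEq W ker_aevalσε.symm).trans
    ((Ideal.quotientKerEquivRange aevalσε).trans (Subalgebra.equivOfEq _ _ range_aevalσε)), ?_⟩
  exact ⟨aeval_X _ _, aeval_X _ _, aeval_X _ _, aeval_X _ _⟩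

end
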